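/- arXiv:math/0109122 — 7 statements merged into one kernel-verified Lean document; each statement's English description precedes it below -/
import Mathlib

section
/- Let c(m,n,ℓ) = (-1)^{m+n-ℓ-1} (m+n-ℓ-1)! ℓ! C(m,ℓ) C(n,ℓ). Then for all positive integers m, n, the sum ∑_{ℓ=0}^{min(m,n)} c(m,n,ℓ) = 0. -/
open Finset Nat

/-! Write `m = d + 1` and `q = n - ℓ`. Since `ℓ! C(n, ℓ) = n! / q!` and
`(d + q)! / q! = d! C(d + q, d)`, the `ℓ`-th term is `(-1)ᵈ d! n!` times
`C(m, ℓ) · (-1)^q C(d + q, d) = C(m, ℓ) · C(-m, q)`. The sum is therefore a multiple of the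
Chu–Vandermonde convolution `∑_{ℓ + q = n} C(m, ℓ) C(-m, q) = C(0, n)`, which vanishes for `n > 0`. -/

theorem Ring.choose_neg_natCast_succ (d q : ℕ) :
    Ring.choose (-((d + 1 : ℕ) : ℤ)) q = (-1) ^ q * ((d + q).choose d : ℤ) := by
  rw [Ring.choose_neg, Units.smul_def, Int.coe_negOnePow_natCast,
    show ((d + 1 : ℕ) : ℤ) + q - 1 = ((d + q : ℕ) : ℤ) by push_cast; ring,
    Ring.choose_natCast, Nat.choose_symm_add, smul_eq_mul]

theorem sum_range_choose_mul_neg_one_pow_mul_choose_eq_zero (d : ℕ) {n : ℕ} (hn : 0 < n) :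
    ∑ ℓ ∈ range (n + 1),
      ((d + 1).choose ℓ : ℤ) * ((-1) ^ (n - ℓ) * ((d + (n - ℓ)).choose d : ℤ)) = 0 := by
  have h := Ring.add_choose_eq n (Commute.neg_right (Commute.refl ((d + 1 : ℕ) : ℤ)))
  rw [add_neg_cancel, Ring.choose_zero_pos ℤ hn, Nat.sum_antidiagonal_eq_sum_range_succ_mk] at h
  simp only [Ring.choose_natCast, Ring.choose_neg_natCast_succ] at h
  exact h.symm

theorem factorial_add_mul_factorial_mul_choose (d q ℓ : ℕ) :
    (d + q)! * ℓ ! * (q + ℓ).choose ℓ = d ! * (q + ℓ)! * (d + q).choose d := by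
  apply Nat.eq_of_mul_eq_mul_right (factorial_pos q)
  calc (d + q)! * ℓ ! * (q + ℓ).choose ℓ * q !
      = (d + q)! * ((q + ℓ).choose ℓ * q ! * ℓ !) := by ring
    _ = (d + q)! * (q + ℓ)! := by rw [add_choose_mul_factorial_mul_factorial]
    _ = (d + q).choose d * q ! * d ! * (q + ℓ)! := by
        rw [add_comm d q, add_choose_mul_factorial_mul_factorial]
    _ = d ! * (q + ℓ)! * (d + q).choose d * q ! := by ring

/-- The vanishing identity for the coefficients
`c(m,n,ℓ) = (-1)^(m+n-ℓ-1) (m+n-ℓ-1)! ℓ! C(m,ℓ) C(n,ℓ)`. -/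
theorem sum_c_eq_zero (m n : ℕ) (hm : 0 < m) (hn : 0 < n) :
    ∑ ℓ ∈ Finset.range (min m n + 1),
      ((-1 : ℤ) ^ (m + n - ℓ - 1) * (Nat.factorial (m + n - ℓ - 1)) * (Nat.factorial ℓ) *
        (m.choose ℓ) * (n.choose ℓ)) = 0 := by
  obtain ⟨d, rfl⟩ := Nat.exists_eq_add_one.2 hm
  rw [sum_subset (range_subset_range.2 (by omega : min (d + 1) n + 1 ≤ n + 1)) ?vanish,
    sum_congr rfl (g := fun ℓ ↦ (-1 : ℤ) ^ d * d ! * n ! *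
      (((d + 1).choose ℓ : ℤ) * ((-1) ^ (n - ℓ) * ((d + (n - ℓ)).choose d : ℤ)))) ?term,
    ← mul_sum, sum_range_choose_mul_neg_one_pow_mul_choose_eq_zero d hn, mul_zero]
  case vanish =>
    intro ℓ hℓn hℓmin
    rw [mem_range] at hℓn hℓmin
    simp [Nat.choose_eq_zero_of_lt (show d + 1 < ℓ by omega)]
  case term =>
    intro ℓ hℓ
    obtain ⟨q, rfl⟩ : ∃ q, n = q + ℓ := ⟨n - ℓ, by rw [mem_range] at hℓ; omega⟩
    rw [show d + 1 + (q + ℓ) - ℓ - 1 = d + q by omega, show q + ℓ - ℓ = q by omega]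
    have h := congrArg (Nat.cast : ℕ → ℤ) (factorial_add_mul_factorial_mul_choose d q ℓ)
    push_cast at h
    linear_combination ((-1) ^ (d + q) * ((d + 1).choose ℓ : ℤ)) * h
end

section
/- For positive integers m, n, the polynomial P_{m,n}(t) = ∑_{ℓ=0}^{min(m,n)} d(m,n,ℓ) (-t)^ℓ, where d(m,n,ℓ) = C(m,ℓ)C(n,ℓ)/C(m+n-1,ℓ), satisfies the differential equation t(1-t) y''(t) - (m+n-1)(1-t) y'(t) - m n y(t) = 0. -/
/-!
The equation is Gauss's hypergeometric equation with `a = -m`, `b = -n`, `c = 1 - m - n`, and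
`P_{m,n}` is the terminating series `₂F₁(-m, -n; 1 - m - n; t)`. The operator sends `t^ℓ` to
`ℓ(ℓ - m - n) t^(ℓ-1) - (ℓ - m)(ℓ - n) t^ℓ`, so on `∑ c_ℓ t^ℓ` it telescopes to zero once
`c_(ℓ+1) (ℓ+1)(ℓ+1-m-n) = c_ℓ (ℓ-m)(ℓ-n)`. For `c_ℓ = (-1)^ℓ d(m,n,ℓ)` this is the ratio of
consecutive binomial coefficients, and the last term drops out because `(ℓ-m)(ℓ-n)` vanishes
at `ℓ = min(m,n)`.
-/

open Polynomial Finset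

theorem Nat.cast_choose_succ_right_eq {R : Type*} [CommRing R] {m i : ℕ} (h : i ≤ m) :
    (m.choose (i + 1) : R) * (i + 1) = m.choose i * (m - i) := by
  have := congr_arg (Nat.cast : ℕ → R) (Nat.choose_succ_right_eq m i)
  push_cast [Nat.cast_sub h] at this
  exact this

section HypergeometricOperator

variable {R : Type*} [CommRing R]

/-- Gauss's hypergeometric operator with parameters `a = -u`, `b = -v`, `c = 1 - u - v`. -/
noncomputable def hypergeometricOp (u v : R) : R[X] →ₗ[R] R[X] where
  toFun p := X * (1 - X) * derivative (derivative p)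
    - C (u + v - 1) * ((1 - X) * derivative p) - C (u * v) * p
  map_add' p q := by simp only [map_add]; ring
  map_smul' a p := by simp only [smul_eq_C_mul, derivative_C_mul, RingHom.id_apply]; ring

theorem hypergeometricOp_apply (u v : R) (p : R[X]) :
    hypergeometricOp u v p = X * (1 - X) * derivative (derivative p)
      - C (u + v - 1) * ((1 - X) * derivative p) - C (u * v) * p :=
  rfl

theorem hypergeometricOp_X_pow (u v : R) (ℓ : ℕ) :
    hypergeometricOp u v (X ^ ℓ) =
      C (ℓ * (ℓ - u - v)) * X ^ (ℓ - 1) - C ((ℓ - u) * (ℓ - v)) * X ^ ℓ := by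
  rw [hypergeometricOp_apply]
  rcases ℓ with _ | _ | ℓ
  · simp only [pow_zero, derivative_one, map_mul, map_sub, Nat.cast_zero, map_zero]
    ring
  · simp only [zero_add, pow_one, derivative_X, derivative_one, map_mul, map_sub, map_add,
      Nat.cast_one, map_one]
    ring
  · rw [derivative_X_pow, derivative_C_mul, derivative_X_pow]
    simp only [Nat.add_sub_cancel, map_mul, map_sub, map_add, map_natCast, map_one]
    push_cast
    ring

theorem hypergeometricOp_C_mul_X_pow (u v a : R) (ℓ : ℕ) :
    hypergeometricOp u v (C a * X ^ ℓ) =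
      C (a * ℓ * (ℓ - u - v)) * X ^ (ℓ - 1) - C (a * (ℓ - u) * (ℓ - v)) * X ^ ℓ := by
  rw [← smul_eq_C_mul, map_smul, hypergeometricOp_X_pow, smul_eq_C_mul]
  simp only [map_mul]
  ring

theorem hypergeometricOp_sum_eq_zero (u v : R) (c : ℕ → R) (N : ℕ)
    (hrec : ∀ i < N, c (i + 1) * (i + 1) * (i + 1 - u - v) = c i * (i - u) * (i - v))
    (htop : c N * (N - u) * (N - v) = 0) :
    hypergeometricOp u v (∑ i ∈ range (N + 1), C (c i) * X ^ i) = 0 := by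
  simp only [map_sum, hypergeometricOp_C_mul_X_pow, sum_sub_distrib]
  rw [sum_range_succ', sum_range_succ, htop]
  have hshift : ∀ i ∈ range N, C (c (i + 1) * ↑(i + 1) * (↑(i + 1) - u - v)) * X ^ (i + 1 - 1)
      = C (c i * (i - u) * (i - v)) * X ^ i := fun i hi => by
    rw [Nat.add_sub_cancel, Nat.cast_succ, hrec i (mem_range.mp hi)]
  rw [sum_congr rfl hshift]
  simp only [Nat.cast_zero, mul_zero, zero_mul, map_zero, add_zero, sub_self]

end HypergeometricOperator

section ChooseRatio

variable (K : Type*) [Field K] [CharZero K]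

/-- The coefficient `d(m,n,ℓ)`. -/
def chooseRatio (m n ℓ : ℕ) : K :=
  (m.choose ℓ * n.choose ℓ : K) / ((m + n - 1).choose ℓ : K)

variable {K}

theorem chooseRatio_succ_mul {m n i : ℕ} (hm : i < m) (hn : i < n) :
    chooseRatio K m n (i + 1) * (i + 1) * (m + n - 1 - i) =
      chooseRatio K m n i * (m - i) * (n - i) := by
  have hM : ((m + n - 1 : ℕ) : K) = m + n - 1 := by
    rw [Nat.cast_sub (by omega), Nat.cast_add, Nat.cast_one]
  have hchoose_ne : ((m + n - 1).choose i : K) ≠ 0 := by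
    exact_mod_cast (Nat.choose_pos (by omega)).ne'
  have hMi : (m + n - 1 - i : K) ≠ 0 := by
    rw [← hM, ← Nat.cast_sub (by omega)]
    exact_mod_cast (by omega : m + n - 1 - i ≠ 0)
  have hchoose_succ := Nat.cast_choose_succ_right_eq (R := K) (by omega : i ≤ m + n - 1)
  rw [hM] at hchoose_succ
  unfold chooseRatio
  calc (m.choose (i + 1) * n.choose (i + 1) : K) / (m + n - 1).choose (i + 1) * (i + 1)
        * (m + n - 1 - i)
      = (m.choose (i + 1) * (i + 1)) * (n.choose (i + 1) * (i + 1))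
          / ((m + n - 1).choose (i + 1) * (i + 1)) * (m + n - 1 - i) := by
        field_simp
    _ = (m.choose i * (m - i)) * (n.choose i * (n - i))
          / ((m + n - 1).choose i * (m + n - 1 - i)) * (m + n - 1 - i) := by
        rw [Nat.cast_choose_succ_right_eq hm.le, Nat.cast_choose_succ_right_eq hn.le, hchoose_succ]
    _ = (m.choose i * n.choose i : K) / (m + n - 1).choose i * (m - i) * (n - i) := by
        field_simp

end ChooseRatio

theorem P_satisfies_ODE_general (m n : ℕ) :
    let P : Polynomial ℚ := ∑ ℓ ∈ Finset.range (min m n + 1),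
      Polynomial.C ((m.choose ℓ * n.choose ℓ : ℚ) / ((m + n - 1).choose ℓ : ℚ)) *
        (-Polynomial.X) ^ ℓ
    Polynomial.X * (1 - Polynomial.X) * derivative (derivative P)
      - Polynomial.C ((m : ℚ) + n - 1) * ((1 - Polynomial.X) * derivative P)
      - Polynomial.C ((m : ℚ) * n) * P = 0 := by
  intro P
  have hP : P = ∑ ℓ ∈ range (min m n + 1), C ((-1) ^ ℓ * chooseRatio ℚ m n ℓ) * X ^ ℓ :=
    sum_congr rfl fun ℓ _ => by
      rw [neg_pow, map_mul, map_pow, map_neg, map_one, chooseRatio]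
      ring
  show hypergeometricOp (m : ℚ) n P = 0
  rw [hP]
  refine hypergeometricOp_sum_eq_zero _ _ _ _ (fun i hi => ?_) ?_
  · obtain ⟨him, hin⟩ := lt_min_iff.mp hi
    linear_combination (-1) ^ i * chooseRatio_succ_mul (K := ℚ) him hin
  · rcases min_choice m n with h | h <;> simp [h]

/-- The hypergeometric polynomial `P_{m,n}(t) = ∑ d(m,n,ℓ) (-t)^ℓ`,
with `d(m,n,ℓ) = C(m,ℓ)C(n,ℓ)/C(m+n-1,ℓ)`, satisfies
`t(1-t) y'' - (m+n-1)(1-t) y' - mn y = 0`. -/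
theorem P_satisfies_ODE (m n : ℕ) (hm : 0 < m) (hn : 0 < n) :
    let P : Polynomial ℚ := ∑ ℓ ∈ Finset.range (min m n + 1),
      Polynomial.C ((m.choose ℓ * n.choose ℓ : ℚ) / ((m + n - 1).choose ℓ : ℚ)) *
        (-Polynomial.X) ^ ℓ
    Polynomial.X * (1 - Polynomial.X) * derivative (derivative P)
      - Polynomial.C ((m : ℚ) + n - 1) * ((1 - Polynomial.X) * derivative P)
      - Polynomial.C ((m : ℚ) * n) * P = 0 :=
  P_satisfies_ODE_general m n
end

section
/- For positive integers m, n, P_{m,n}(1) = 0, where P_{m,n}(t) = ∑_{ℓ=0}^{min(m,n)} [C(m,ℓ)C(n,ℓ)/C(m+n-1,ℓ)] (-t)^ℓ. -/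
open Finset fwdDiff

/-! Since `C(m,ℓ) C(m+n-1,m) = C(m+n-1,ℓ) C(m+n-1-ℓ,n-1)`, the `ℓ`-th term of `P_{m,n}(1)` is
`(-1)^ℓ C(n,ℓ) C(m+n-1-ℓ,n-1) / C(m+n-1,m)`, and the terms with `ℓ > m` vanish. Up to the constant
`C(m+n-1,m)` the sum is therefore an `n`-th finite difference of `x ↦ C(x,n-1)`, a polynomial of
degree `n - 1`, hence zero. -/

theorem fwdDiff_iter_choose_eq_zero_of_lt {j n : ℕ} (h : j < n) :
    Δ_[1] ^[n] (fun x ↦ x.choose j : ℕ → ℤ) = 0 := by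
  obtain ⟨d, rfl⟩ := Nat.exists_eq_add_of_lt h
  have hj : Δ_[1] ^[j] (fun x ↦ x.choose j : ℕ → ℤ) = fun _ ↦ 1 := by
    simpa using fwdDiff_iter_choose 0 j
  rw [show j + d + 1 = d + 1 + j by ring, Function.iterate_add_apply, hj,
    Function.iterate_succ_apply, fwdDiff_const]
  exact Function.iterate_fixed rfl d

theorem sum_range_alternating_mul_choose_sub_choose_eq_zero {R : Type*} [CommRing R]
    {j n x : ℕ} (hj : j < n) (hx : n ≤ x) :
    ∑ k ∈ range (n + 1), (-1 : R) ^ k * n.choose k * ((x - k).choose j : R) = 0 := by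
  obtain ⟨y, rfl⟩ := Nat.exists_eq_add_of_le' hx
  have hΔ := congr_fun (fwdDiff_iter_choose_eq_zero_of_lt hj) y
  rw [fwdDiff_iter_eq_sum_shift, ← sum_range_reflect, Pi.zero_apply] at hΔ
  have := congr_arg (Int.cast : ℤ → R) hΔ
  push_cast at this
  rw [← this]
  refine sum_congr rfl fun k hk ↦ ?_
  have hk : k ≤ n := Nat.lt_succ_iff.mp (mem_range.mp hk)
  rw [Nat.choose_symm hk, Nat.sub_sub_self hk, smul_eq_mul, show y + n - k = y + (n - k) by omega]
  simp

theorem Nat.choose_mul_choose_eq_choose_mul_choose_sub {m n ℓ : ℕ} (h : ℓ ≤ m) :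
    (m + n).choose m * m.choose ℓ = (m + n).choose ℓ * (m + n - ℓ).choose n := by
  rw [Nat.choose_mul h, Nat.choose_symm_of_eq_add (by omega : m + n - ℓ = m - ℓ + n)]

/-- `P_{m,n}(1) = 0`:  `∑_{ℓ=0}^{min(m,n)} (C(m,ℓ)C(n,ℓ)/C(m+n-1,ℓ)) (-1)^ℓ = 0`. -/
theorem P_at_one_eq_zero (m n : ℕ) (hm : 0 < m) (hn : 0 < n) :
    ∑ ℓ ∈ Finset.range (min m n + 1),
      ((m.choose ℓ * n.choose ℓ : ℚ) / ((m + n - 1).choose ℓ : ℚ)) * (-1) ^ ℓ = 0 := by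
  obtain ⟨n', rfl⟩ : ∃ n', n = n' + 1 := ⟨n - 1, by omega⟩
  rw [show m + (n' + 1) - 1 = m + n' by omega]
  have hterm : ∀ ℓ ∈ range (min m (n' + 1) + 1),
      ((m.choose ℓ * (n' + 1).choose ℓ : ℚ) / ((m + n').choose ℓ : ℚ)) * (-1) ^ ℓ =
        (-1) ^ ℓ * (n' + 1).choose ℓ * ((m + n' - ℓ).choose n' : ℚ) / (m + n').choose m := by
    intro ℓ hℓ
    have hℓm : ℓ ≤ m := by simp only [mem_range] at hℓ; omega
    have hchoose : ((m + n').choose m * m.choose ℓ : ℚ) =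
        (m + n').choose ℓ * (m + n' - ℓ).choose n' := by
      exact_mod_cast Nat.choose_mul_choose_eq_choose_mul_choose_sub hℓm
    rw [div_mul_eq_mul_div, div_eq_div_iff]
    · linear_combination (-1) ^ ℓ * ((n' + 1).choose ℓ : ℚ) * hchoose
    · exact_mod_cast (Nat.choose_pos (by omega)).ne'
    · exact_mod_cast (Nat.choose_pos (by omega)).ne'
  have hvanish : ∀ ℓ ∈ range (n' + 1 + 1), ℓ ∉ range (min m (n' + 1) + 1) →
      (-1) ^ ℓ * (n' + 1).choose ℓ * ((m + n' - ℓ).choose n' : ℚ) = 0 := by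
    intro ℓ hℓ hℓm
    simp only [mem_range] at hℓ hℓm
    rw [Nat.choose_eq_zero_of_lt (n := m + n' - ℓ) (by omega), Nat.cast_zero, mul_zero]
  rw [sum_congr rfl hterm, ← sum_div, sum_subset (range_subset_range.mpr (by omega)) hvanish,
    sum_range_alternating_mul_choose_sub_choose_eq_zero (by omega) (by omega), zero_div]
end

section
/- Let A, B be commutative rings and f : A → B a linear (additive, B-module when B is a C-algebra) map. Define Φ_1(f) = f, Φ_2(f)(a₁,a₂) = f(a₁)f(a₂) − f(a₁a₂), and inductively Φ_{n+1}(f)(a₁,…,a_{n+1}) = f(a₁)Φ_n(f)(a₂,…,a_{n+1}) − ∑_{j=2}^{n+1} Φ_n(f)(a₂,…,a₁a_j,…,a_{n+1}). Then Φ_m(f)(a₁,…,a_m) = ∑_{σ ∈ Σ_m} ε(σ) f_σ(a₁,…,a_m), where for a permutation σ with cycle decomposition γ₁⋯γ_q, f_σ = f_{γ₁}⋯f_{γ_q} and f_{(r₁ r₂ … r_k)}(a₁,…,a_m) = f(a_{r₁}a_{r₂}⋯a_{r_k}). -/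
open Finset

variable {A B : Type*} [CommRing A] [CommRing B]

/-- Inductive Frobenius transformation on lists:
`Φ_{n+1}(f)(a₁,…,a_{n+1}) = f(a₁)Φ_n(f)(a₂,…) − ∑_j Φ_n(f)(a₂,…,a₁a_j,…)`. -/
def PhiL (f : A → B) : List A → B
  | [] => 1
  | a :: l => f a * PhiL f l -
      ∑ j ∈ Finset.range l.length, PhiL f (l.modify j (fun x => a * x))
termination_by l => l.length
decreasing_by all_goals simp [List.length_modify]

/-- The Frobenius term `f_σ(a₁,…,a_n)`: the product over the cycles of `σ`
(including fixed points) of `f` applied to the product of the `aᵢ` along the cycle. -/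
def frobTerm (f : A → B) {n : ℕ} (a : Fin n → A) (σ : Equiv.Perm (Fin n)) : B :=
  ∏ i ∈ Finset.univ.filter (fun i => ∀ j, σ.SameCycle i j → i ≤ j),
    f (∏ j ∈ Finset.univ.filter (fun j => σ.SameCycle i j), a j)

/-- The Frobenius transformation (closed formula):
`Φ_n(f)(a₁,…,a_n) = ∑_{σ∈Σ_n} ε(σ) f_σ(a₁,…,a_n)`. -/
def PhiPerm (f : A → B) {n : ℕ} (a : Fin n → A) : B :=
  ∑ σ : Equiv.Perm (Fin n), (Equiv.Perm.sign σ : ℤ) • frobTerm f a σ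

/-!
Both sides satisfy the recursion defining `PhiL`. Deleting the point `0` is the bijection
`decomposeFin : σ ↦ (σ 0, e)` from `Perm (Fin (n + 1))` to `Fin (n + 1) × Perm (Fin n)`, where `e`
is the permutation induced by `σ` on `1, …, n`. If `σ 0 = 0`, then `{0}` is a cycle of its own
and `f_σ(a) = f(a₀) f_e(a₁, …, aₙ)`. If `σ 0 = j + 1`, then `0` sits in front of `j + 1` in
its cycle and the other cycles are those of `e`, so `f_σ(a) = f_e(a₁, …, a₀ a_{j+1}, …, aₙ)`,
while `sign σ = - sign e`. Summing over `σ` gives the recursion.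
-/

namespace Equiv.Perm

variable {α : Type*}

theorem SameCycle.mem_of_mapsTo [Finite α] {f : Perm α} {s : Set α} {x y : α}
    (hs : Set.MapsTo f s s) (h : f.SameCycle x y) (hx : x ∈ s) : y ∈ s := by
  obtain ⟨i, rfl⟩ := h.exists_nat_pow_eq
  rw [coe_pow]
  exact hs.iterate i hx

section CycleSets

variable [Fintype α] [DecidableEq α]

def cycleSet (σ : Perm α) (i : α) : Finset α := univ.filter (σ.SameCycle i)

def cycleSets (σ : Perm α) : Finset (Finset α) := univ.image σ.cycleSet

@[simp]
theorem mem_cycleSet {σ : Perm α} {i j : α} : j ∈ σ.cycleSet i ↔ σ.SameCycle i j := by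
  simp [cycleSet]

theorem cycleSet_eq_cycleSet_iff {σ : Perm α} {i j : α} :
    σ.cycleSet i = σ.cycleSet j ↔ σ.SameCycle i j := by
  refine ⟨fun h => mem_cycleSet.1 (h ▸ mem_cycleSet.2 .rfl), fun h => ?_⟩
  ext k
  simp only [mem_cycleSet]
  exact ⟨h.symm.trans, h.trans⟩

end CycleSets

variable {n : ℕ}

/-- `e` is the permutation induced by `σ` on the nonzero points: from `w.succ`, the map `σ`
either goes straight to `(e w).succ` or makes a detour through `0`. -/
theorem sameCycle_succ_succ_iff_of_induced {σ : Perm (Fin (n + 1))} {e : Perm (Fin n)}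
    (hσ : ∀ w, σ w.succ = (e w).succ ∨ σ w.succ = 0 ∧ σ 0 = (e w).succ) {x y : Fin n} :
    σ.SameCycle x.succ y.succ ↔ e.SameCycle x y := by
  constructor
  · intro h
    let s : Set (Fin (n + 1)) := {z | ∃ w, e.SameCycle x w ∧ (z = w.succ ∨ z = 0 ∧ σ w.succ = 0)}
    have hs : Set.MapsTo σ s s := by
      rintro z ⟨w, hxw, rfl | ⟨rfl, hw⟩⟩
      · rcases hσ w with hw | ⟨hw, -⟩
        · exact ⟨e w, sameCycle_apply_right.2 hxw, .inl hw⟩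
        · exact ⟨w, hxw, .inr ⟨hw, hw⟩⟩
      · rcases hσ w with hw' | ⟨-, h0⟩
        · exact absurd (hw.symm.trans hw') (Fin.succ_ne_zero _).symm
        · exact ⟨e w, sameCycle_apply_right.2 hxw, .inl h0⟩
    obtain ⟨w, hxw, hy | ⟨hy, -⟩⟩ := h.mem_of_mapsTo hs ⟨x, .rfl, .inl rfl⟩
    · rwa [Fin.succ_inj.1 hy]
    · exact absurd hy (Fin.succ_ne_zero y)
  · have hstep : ∀ w, σ.SameCycle w.succ (e w).succ := fun w => by
      rcases hσ w with hw | ⟨hw, h0⟩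
      · exact hw ▸ sameCycle_apply_right.2 .rfl
      · exact sameCycle_apply_left.1 (hw ▸ h0 ▸ sameCycle_apply_right.2 .rfl)
    exact fun h => h.mem_of_mapsTo (s := {w : Fin n | σ.SameCycle x.succ w.succ})
      (fun w hw => hw.trans (hstep w)) .rfl

theorem decomposeFin_symm_apply_succ_eq_or (p : Fin (n + 1)) (e : Perm (Fin n)) (w : Fin n) :
    decomposeFin.symm (p, e) w.succ = (e w).succ ∨
      decomposeFin.symm (p, e) w.succ = 0 ∧ decomposeFin.symm (p, e) 0 = (e w).succ := by
  rw [decomposeFin_symm_apply_succ, decomposeFin_symm_apply_zero]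
  by_cases h : (e w).succ = p
  · exact .inr ⟨h ▸ swap_apply_right _ _, h.symm⟩
  · exact .inl (swap_apply_of_ne_of_ne (Fin.succ_ne_zero _) h)

theorem sameCycle_decomposeFin_symm_succ_succ {p : Fin (n + 1)} {e : Perm (Fin n)}
    {x y : Fin n} : (decomposeFin.symm (p, e)).SameCycle x.succ y.succ ↔ e.SameCycle x y :=
  sameCycle_succ_succ_iff_of_induced (decomposeFin_symm_apply_succ_eq_or p e)

end Equiv.Perm

open Equiv Perm

variable {n : ℕ}

theorem frobTerm_eq_prod_cycleSets (f : A → B) (a : Fin n → A) (σ : Perm (Fin n)) :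
    frobTerm f a σ = ∏ c ∈ σ.cycleSets, f (∏ j ∈ c, a j) := by
  set R := univ.filter fun i => ∀ j, σ.SameCycle i j → i ≤ j
  have hinj : Set.InjOn σ.cycleSet R := fun i hi i' hi' h => by
    have hii' := cycleSet_eq_cycleSet_iff.1 h
    exact le_antisymm ((mem_filter.1 hi).2 _ hii') ((mem_filter.1 hi').2 _ hii'.symm)
  have himage : R.image σ.cycleSet = σ.cycleSets := by
    refine (image_subset_image (filter_subset _ _)).antisymm fun c hc => ?_
    obtain ⟨i, -, rfl⟩ := mem_image.1 hc
    have hne : (σ.cycleSet i).Nonempty := ⟨i, mem_cycleSet.2 .rfl⟩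
    have him : σ.SameCycle i ((σ.cycleSet i).min' hne) := mem_cycleSet.1 (min'_mem _ hne)
    refine mem_image.2 ⟨_, mem_filter.2 ⟨mem_univ _, fun j hj => ?_⟩,
      cycleSet_eq_cycleSet_iff.2 him.symm⟩
    exact min'_le _ _ (mem_cycleSet.2 (him.trans hj))
  rw [← himage, prod_image hinj]
  rfl

theorem cycleSets_decomposeFin_symm_zero (e : Perm (Fin n)) :
    (decomposeFin.symm (0, e)).cycleSets =
      insert {0} (e.cycleSets.map (mapEmbedding (Fin.succEmb n)).toEmbedding) := by
  set σ := decomposeFin.symm (0, e)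
  have hfix : ∀ z, σ.SameCycle 0 z ↔ z = 0 := fun z =>
    ⟨fun h => (h.eq_of_left (decomposeFin_symm_apply_zero 0 e)).symm, fun h => h ▸ .rfl⟩
  have h0 : σ.cycleSet 0 = {0} := by ext z; simp [hfix]
  have hsucc : ∀ x, σ.cycleSet x.succ = (e.cycleSet x).map (Fin.succEmb n) := fun x => by
    ext z
    cases z using Fin.cases with
    | zero => simp [sameCycle_comm (x := x.succ), hfix]
    | succ w => simpa using sameCycle_decomposeFin_symm_succ_succ
  ext c
  simp [cycleSets, Fin.exists_fin_succ, h0, hsucc, eq_comm]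

theorem frobTerm_decomposeFin_symm_zero (f : A → B) (a : Fin (n + 1) → A) (e : Perm (Fin n)) :
    frobTerm f a (decomposeFin.symm (0, e)) = f (a 0) * frobTerm f (a ∘ Fin.succ) e := by
  have hnot : {0} ∉ e.cycleSets.map (mapEmbedding (Fin.succEmb n)).toEmbedding := by
    simp [Finset.ext_iff, Fin.forall_fin_succ]
  rw [frobTerm_eq_prod_cycleSets, frobTerm_eq_prod_cycleSets, cycleSets_decomposeFin_symm_zero,
    prod_insert hnot, prod_map, prod_singleton]
  simp [prod_map]

/-- The cycle of `decomposeFin.symm (j.succ, e)` corresponding to the cycle `c` of `e`: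
the point `0` is inserted in front of `j.succ`. -/
def liftCycle (j : Fin n) (c : Finset (Fin n)) : Finset (Fin (n + 1)) :=
  if j ∈ c then insert 0 (c.map (Fin.succEmb n)) else c.map (Fin.succEmb n)

@[simp]
theorem zero_mem_liftCycle {j : Fin n} {c : Finset (Fin n)} : 0 ∈ liftCycle j c ↔ j ∈ c := by
  unfold liftCycle; split_ifs <;> simp [*, Fin.succ_ne_zero]

@[simp]
theorem succ_mem_liftCycle {j w : Fin n} {c : Finset (Fin n)} :
    w.succ ∈ liftCycle j c ↔ w ∈ c := by
  unfold liftCycle; split_ifs <;> simp [Fin.succ_ne_zero]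

theorem liftCycle_injective (j : Fin n) : Function.Injective (liftCycle j) := fun c c' h => by
  ext w
  rw [← succ_mem_liftCycle (j := j), h, succ_mem_liftCycle]

theorem prod_liftCycle {M : Type*} [CommMonoid M] (a : Fin (n + 1) → M) (j : Fin n)
    (c : Finset (Fin n)) :
    ∏ z ∈ liftCycle j c, a z = ∏ w ∈ c, Function.update (a ∘ Fin.succ) j (a 0 * a j.succ) w := by
  unfold liftCycle
  split_ifs with hj
  · rw [prod_insert (by simp [Fin.succ_ne_zero]), prod_map, prod_update_of_mem hj,
      ← mul_prod_erase c _ hj, sdiff_singleton_eq_erase, mul_assoc]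
    rfl
  · rw [prod_map, prod_update_of_notMem hj]
    rfl

theorem cycleSets_decomposeFin_symm_succ (j : Fin n) (e : Perm (Fin n)) :
    (decomposeFin.symm (j.succ, e)).cycleSets = e.cycleSets.image (liftCycle j) := by
  set σ := decomposeFin.symm (j.succ, e)
  have hsucc : ∀ x, σ.cycleSet x.succ = liftCycle j (e.cycleSet x) := fun x => by
    ext z
    cases z using Fin.cases with
    | zero =>
      rw [mem_cycleSet, zero_mem_liftCycle, mem_cycleSet, ← sameCycle_apply_right,
        decomposeFin_symm_apply_zero]
      exact sameCycle_decomposeFin_symm_succ_succ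
    | succ w => simpa using sameCycle_decomposeFin_symm_succ_succ
  have h0 : σ.cycleSet 0 = σ.cycleSet j.succ :=
    cycleSet_eq_cycleSet_iff.2
      (decomposeFin_symm_apply_zero j.succ e ▸ sameCycle_apply_right.2 .rfl)
  ext c
  simpa [cycleSets, Fin.exists_fin_succ, h0, hsucc] using fun h => ⟨j, h⟩

theorem frobTerm_decomposeFin_symm_succ (f : A → B) (a : Fin (n + 1) → A) (j : Fin n)
    (e : Perm (Fin n)) :
    frobTerm f a (decomposeFin.symm (j.succ, e)) =
      frobTerm f (Function.update (a ∘ Fin.succ) j (a 0 * a j.succ)) e := by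
  rw [frobTerm_eq_prod_cycleSets, frobTerm_eq_prod_cycleSets, cycleSets_decomposeFin_symm_succ,
    prod_image (liftCycle_injective j).injOn]
  simp only [prod_liftCycle]

theorem phiPerm_succ (f : A → B) (a : Fin (n + 1) → A) :
    PhiPerm f a = f (a 0) * PhiPerm f (a ∘ Fin.succ) -
      ∑ j : Fin n, PhiPerm f (Function.update (a ∘ Fin.succ) j (a 0 * a j.succ)) := by
  rw [PhiPerm, ← decomposeFin.symm.sum_comp, Fintype.sum_prod_type, Fin.sum_univ_succ]
  simp only [decomposeFin.symm_sign, frobTerm_decomposeFin_symm_zero,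
    frobTerm_decomposeFin_symm_succ]
  simp [PhiPerm, mul_sum, sub_eq_add_neg, mul_left_comm]

theorem List.modify_ofFn {α : Type*} (g : Fin n → α) (j : Fin n) (h : α → α) :
    (List.ofFn g).modify j h = List.ofFn (Function.update g j (h (g j))) := by
  refine List.ext_getElem (by simp) fun i hi _ => ?_
  simp only [List.getElem_modify, List.getElem_ofFn, Function.update_apply]
  split_ifs <;> subst_vars <;> simp_all [Fin.ext_iff]

theorem phiL_ofFn_succ (f : A → B) (a : Fin (n + 1) → A) :
    PhiL f (List.ofFn a) = f (a 0) * PhiL f (List.ofFn (a ∘ Fin.succ)) -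
      ∑ j : Fin n, PhiL f (List.ofFn (Function.update (a ∘ Fin.succ) j (a 0 * a j.succ))) := by
  rw [List.ofFn_succ, PhiL, List.length_ofFn, ← Fin.sum_univ_eq_sum_range]
  simp only [List.modify_ofFn]
  rfl

theorem phiL_eq_phiPerm_general {k : Type*} [Field k]
    [Algebra k A] [Algebra k B] (f : A →ₗ[k] B) {m : ℕ} (a : Fin m → A) :
    PhiL f (List.ofFn a) = PhiPerm (f : A → B) a := by
  induction m with
  | zero =>
    rw [List.ofFn_zero, PhiL, PhiPerm, Fintype.sum_unique]
    simp [frobTerm]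
  | succ n ih => simp only [phiL_ofFn_succ, phiPerm_succ, ih]

/-- Equivalence of the inductive definition (Definition 2.3) and the closed
Frobenius formula (Definition 2.1): for a linear map `f : A → B` between
commutative algebras over a field of characteristic zero,
`Φ_m(f)(a₁,…,a_m) = ∑_{σ∈Σ_m} ε(σ) f_σ(a₁,…,a_m)`. -/
theorem phiL_eq_phiPerm {k : Type*} [Field k] [CharZero k]
    [Algebra k A] [Algebra k B] (f : A →ₗ[k] B) {m : ℕ} (a : Fin m → A) :
    PhiL f (List.ofFn a) = PhiPerm (f : A → B) a :=
  phiL_eq_phiPerm_general f a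
end

section
/- Let A, B be commutative algebras with B an integral domain, and let f : A → B be a linear map. If Φ_{n+1}(f) ≡ 0 but Φ_n(f) ≢ 0, then f(1) = n (as an element of B, i.e., n·1_B). -/
open Finset

variable {A B : Type*} [CommRing A] [CommRing B]

/- Multiplying an entry by `1` changes nothing, so each of the `length l` correction terms
equals `Φ(f)(l)`. -/
theorem PhiL_one_cons (f : A → B) (l : List A) :
    PhiL f (1 :: l) = (f 1 - l.length) * PhiL f l := by
  have one_mul_eq_id : (fun x : A => 1 * x) = id := funext one_mul
  rw [PhiL, one_mul_eq_id]
  simp only [List.modify_id, sum_const, card_range, nsmul_eq_mul]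
  ring

/-- If `B` is an integral domain, `Φ_{n+1}(f) ≡ 0` but `Φ_n(f) ≢ 0`,
then `f(1) = n` in `B`. -/
theorem f_one_eq_n {k : Type*} [Field k] [IsDomain B]
    [Algebra k A] [Algebra k B] (f : A →ₗ[k] B) (n : ℕ)
    (h1 : ∀ l : List A, l.length = n + 1 → PhiL (f : A → B) l = 0)
    (h2 : ∃ l : List A, l.length = n ∧ PhiL (f : A → B) l ≠ 0) :
    f 1 = (n : B) := by
  obtain ⟨l, hl, hne⟩ := h2
  have hvanish : (f 1 - n) * PhiL (f : A → B) l = 0 := by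
    rw [← hl, ← PhiL_one_cons]
    exact h1 (1 :: l) (by simp [hl])
  exact sub_eq_zero.mp ((mul_eq_zero.mp hvanish).resolve_right hne)
end

section
/- Let A, B be commutative algebras with B an integral domain of characteristic zero, and let f : A → B be a linear map with Φ_{n+1}(f) ≡ 0. Then f(1) ∈ {0, 1, 2, …, n} (i.e., f(1) = k·1_B for some integer 0 ≤ k ≤ n). -/
open Finset

variable {A B : Type*} [CommRing A] [CommRing B]

theorem List.modify_replicate_of_apply_eq {α : Type*} {f : α → α} {a : α} (ha : f a = a)
    (m j : ℕ) : (List.replicate m a).modify j f = List.replicate m a := by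
  refine List.ext_getElem (by simp) fun i _ _ => ?_
  simp only [List.getElem_modify, List.getElem_replicate]
  split <;> simp [ha]

/-- Since `e * e = e`, the `m - 1` correction terms of the recursion all equal
`Φ_{m-1}(f)(e, …, e)`. -/
theorem PhiL_replicate_of_isIdempotentElem (f : A → B) {e : A} (he : IsIdempotentElem e) (m : ℕ) :
    PhiL f (List.replicate m e) = ∏ i ∈ range m, (f e - i) := by
  induction m with
  | zero => simp [PhiL]
  | succ m ih =>
    rw [List.replicate_succ, PhiL]
    simp only [List.length_replicate, List.modify_replicate_of_apply_eq he.eq, ih, sum_const,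
      card_range, nsmul_eq_mul, prod_range_succ]
    ring

theorem f_one_mem_range_general {k : Type*} [Field k] [IsDomain B]
    [Algebra k A] [Algebra k B] (f : A →ₗ[k] B) (n : ℕ)
    (h : ∀ l : List A, l.length = n + 1 → PhiL (f : A → B) l = 0) :
    ∃ j : ℕ, j ≤ n ∧ f 1 = (j : B) := by
  have hzero := h (List.replicate (n + 1) 1) (List.length_replicate ..)
  rw [PhiL_replicate_of_isIdempotentElem _ IsIdempotentElem.one] at hzero
  obtain ⟨j, hj, hfj⟩ := prod_eq_zero_iff.mp hzero
  exact ⟨j, Nat.lt_succ_iff.mp (mem_range.mp hj), sub_eq_zero.mp hfj⟩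

/-- If `B` is an integral domain of characteristic zero and `Φ_{n+1}(f) ≡ 0`,
then `f(1) ∈ {0, 1, …, n}`. -/
theorem f_one_mem_range {k : Type*} [Field k] [IsDomain B] [CharZero B]
    [Algebra k A] [Algebra k B] (f : A →ₗ[k] B) (n : ℕ)
    (h : ∀ l : List A, l.length = n + 1 → PhiL (f : A → B) l = 0) :
    ∃ j : ℕ, j ≤ n ∧ f 1 = (j : B) :=
  f_one_mem_range_general f n h
end

section
/- If f : A → B is a sum of n ring homomorphisms f₁, …, f_n : A → B between commutative algebras over a field of characteristic zero, then f is a Frobenius n-homomorphism: Φ_{n+1}(f) ≡ 0 and f(1) = n. -/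
open Finset

variable {A B : Type*} [CommRing A] [CommRing B]
/-- `f` is a Frobenius `n`-homomorphism: `Φ_{n+1}(f) ≡ 0` and `f(1) = n`. -/
def IsFrobeniusHom (f : A → B) (n : ℕ) : Prop :=
  (∀ a : Fin (n + 1) → A, PhiPerm f a = 0) ∧ f 1 = (n : B)

/-! Writing `f = ∑ᵢ gᵢ` and expanding, `f_σ(a)` becomes a sum, over the colourings
`φ : Fin (n+1) → Fin n` constant on the cycles of `σ`, of `∏ⱼ g_{φ j}(aⱼ)`. Exchanging the sums,
the coefficient of each colouring in `Φ_{n+1}(f)(a)` is the signed count of the permutations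
preserving it. By pigeonhole `φ` identifies two points `x ≠ y`, and `σ ↦ σ * swap x y` is a
sign-reversing involution of those permutations, so every coefficient vanishes. -/

open Equiv Function

namespace Equiv.Perm

variable {α β : Type*}

theorem SameCycle.apply_eq_of_comp_eq {σ : Perm α} {φ : α → β} (hφ : φ ∘ σ = φ) {x y : α}
    (h : σ.SameCycle x y) : φ x = φ y := by
  have hinv : ∀ z, φ (σ⁻¹ z) = φ z := fun z => by simpa using (congrFun hφ (σ⁻¹ z)).symm
  obtain ⟨k, rfl⟩ := h
  induction k using Int.induction_on generalizing x with
  | zero => simp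
  | succ k ih => rw [zpow_add_one, mul_apply, ← ih]; exact (congrFun hφ x).symm
  | pred k ih => rw [zpow_sub_one, mul_apply, ← ih, hinv]

theorem sum_sign_filter_comp_eq_self_eq_zero [Fintype α] [DecidableEq α] [DecidableEq β]
    {φ : α → β} (hφ : ¬ Injective φ) :
    ∑ σ ∈ univ.filter (fun σ : Perm α => φ ∘ σ = φ), (sign σ : ℤ) = 0 := by
  obtain ⟨x, y, hφxy, hxy⟩ := not_injective_iff.1 hφ
  have hswap : φ ∘ swap x y = φ := by
    funext z
    rcases eq_or_ne z x with rfl | hzx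
    · simpa using hφxy.symm
    rcases eq_or_ne z y with rfl | hzy
    · simpa using hφxy
    · simp [swap_apply_of_ne_of_ne hzx hzy]
  refine sum_involution (fun σ _ => σ * swap x y) (fun σ _ => ?_) (fun σ _ _ h => ?_)
    (fun σ hσ => ?_) (fun σ _ => mul_swap_mul_self x y σ)
  · simp [sign_mul, sign_swap hxy]
  · exact hxy (swap_eq_one_iff.1 (mul_eq_left.1 h))
  · simp only [mem_filter, mem_univ, true_and] at hσ ⊢
    rw [coe_mul, ← comp_assoc, hσ, hswap]

abbrev Cycles (σ : Perm α) : Type _ := Quotient (SameCycle.setoid σ)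

variable [Fintype α] [DecidableEq α]

instance (σ : Perm α) : Fintype (Cycles σ) :=
  @Quotient.fintype _ _ _ (instDecidableRelSameCycle σ)

instance (σ : Perm α) : DecidableEq (Cycles σ) :=
  @Quotient.decidableEq _ _ (instDecidableRelSameCycle σ)

theorem sum_fun_cycles_eq_sum_filter {ι M : Type*} [Fintype ι] [DecidableEq ι] [AddCommMonoid M]
    (σ : Perm α) (F : (α → ι) → M) :
    ∑ q : Cycles σ → ι, F (q ∘ Quotient.mk _) =
      ∑ φ ∈ univ.filter (fun φ : α → ι => φ ∘ σ = φ), F φ := by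
  refine sum_bij (fun q _ => q ∘ Quotient.mk _) (fun q _ => ?_)
    (fun q _ q' _ h => Quotient.mk_surjective.injective_comp_right h) (fun φ hφ => ?_)
    (fun _ _ => rfl)
  · simp only [mem_filter, mem_univ, true_and]
    funext x
    exact congrArg q (Quotient.sound (SameCycle.refl σ x).apply_left)
  · simp only [mem_filter, mem_univ, true_and] at hφ
    exact ⟨Quotient.lift φ fun x y => SameCycle.apply_eq_of_comp_eq hφ, mem_univ _, rfl⟩

end Equiv.Perm

section

open Equiv.Perm

variable {m : ℕ} {ι : Type*} [Fintype ι]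

theorem frobTerm_eq_prod_cycles (f : A → B) (a : Fin m → A) (σ : Perm (Fin m)) :
    frobTerm f a σ = ∏ c : Cycles σ, f (∏ j ∈ univ.filter (Quotient.mk _ · = c), a j) := by
  refine prod_bij (fun i _ => Quotient.mk _ i) (fun _ _ => mem_univ _)
    (fun i hi i' hi' h => ?_) (fun c _ => ?_) (fun i _ => ?_)
  · simp only [mem_filter, mem_univ, true_and] at hi hi'
    have hii' : σ.SameCycle i i' := Quotient.exact h
    exact le_antisymm (hi i' hii') (hi' i hii'.symm)
  · induction c using Quotient.inductionOn with | h j => ?_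
    -- `frobTerm` indexes the cycle of `j` by its least element
    have hne : (univ.filter (σ.SameCycle j)).Nonempty := ⟨j, by simp [SameCycle.refl]⟩
    have hmin := (univ.filter (σ.SameCycle j)).min'_mem hne
    simp only [mem_filter, mem_univ, true_and] at hmin ⊢
    refine ⟨_, fun k hk => min'_le _ _ ?_, Quotient.sound hmin.symm⟩
    simpa using hmin.trans hk
  · congr 2
    ext j
    simpa using sameCycle_comm.trans (Quotient.eq (r := SameCycle.setoid σ)).symm

theorem frobTerm_sum_ringHom [DecidableEq ι] (g : ι → A →+* B) (a : Fin m → A)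
    (σ : Perm (Fin m)) :
    frobTerm (fun x => ∑ i, g i x) a σ =
      ∑ φ ∈ univ.filter (fun φ : Fin m → ι => φ ∘ σ = φ), ∏ j, g (φ j) (a j) := by
  rw [frobTerm_eq_prod_cycles, ← sum_fun_cycles_eq_sum_filter]
  simp only [map_prod]
  rw [Fintype.prod_sum]
  refine Fintype.sum_congr _ _ fun q => ?_
  rw [← prod_fiberwise univ (Quotient.mk (SameCycle.setoid σ))]
  refine Fintype.prod_congr _ _ fun c => prod_congr rfl fun j hj => ?_
  rw [comp_apply, (mem_filter.1 hj).2]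

theorem phiPerm_sum_ringHom [DecidableEq ι] (g : ι → A →+* B) (a : Fin m → A) :
    PhiPerm (fun x => ∑ i, g i x) a =
      ∑ φ : Fin m → ι, (∑ σ ∈ univ.filter (fun σ : Perm (Fin m) => φ ∘ σ = φ),
        (sign σ : ℤ)) • ∏ j, g (φ j) (a j) := by
  simp only [PhiPerm, frobTerm_sum_ringHom, smul_sum, sum_smul]
  exact sum_comm' (by simp)

theorem phiPerm_sum_ringHom_eq_zero (g : ι → A →+* B) (a : Fin m → A)
    (hm : Fintype.card ι < m) : PhiPerm (fun x => ∑ i, g i x) a = 0 := by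
  classical
  rw [phiPerm_sum_ringHom]
  refine sum_eq_zero fun φ _ => ?_
  have hφ : ¬ Injective φ := fun h =>
    (Fintype.card_le_of_injective φ h).not_gt (by simpa using hm)
  rw [sum_sign_filter_comp_eq_self_eq_zero hφ, zero_smul]

end

theorem isFrobeniusHom_of_sum_ringHoms_general {k : Type*} [Field k]
    [Algebra k A] [Algebra k B] (f : A →ₗ[k] B) (n : ℕ)
    (g : Fin n → (A →+* B)) (hf : ∀ a : A, f a = ∑ i, g i a) :
    IsFrobeniusHom (f : A → B) n := by
  have hf' : (f : A → B) = fun x => ∑ i, g i x := funext hf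
  refine ⟨fun a => ?_, by simp [hf]⟩
  rw [hf']
  exact phiPerm_sum_ringHom_eq_zero g a (by simp)

/-- A sum of `n` ring homomorphisms is a Frobenius `n`-homomorphism. -/
theorem isFrobeniusHom_of_sum_ringHoms {k : Type*} [Field k] [CharZero k]
    [Algebra k A] [Algebra k B] (f : A →ₗ[k] B) (n : ℕ)
    (g : Fin n → (A →+* B)) (hf : ∀ a : A, f a = ∑ i, g i a) :
    IsFrobeniusHom (f : A → B) n :=
  isFrobeniusHom_of_sum_ringHoms_general f n g hf
end
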